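/- Let n ≥ 4 and let P_n be the path graph on n vertices. If n is odd, then P_n is neither α-unfrozen nor β-unfrozen; if n is even, then P_n is both α-unfrozen and β-unfrozen. -/
import Mathlib


open SimpleGraph

/-- The independence number of a graph: the maximum size of an independent set. -/
noncomputable def indNum {V : Type*} (G : SimpleGraph V) : ℕ :=
  sSup {n | ∃ s : Finset V, (∀ a ∈ s, ∀ b ∈ s, a ≠ b → ¬ G.Adj a b) ∧ s.card = n}

/-- The vertex cover number of a graph: the minimum size of a vertex cover. -/
noncomputable def covNum {V : Type*} (G : SimpleGraph V) : ℕ :=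
  sInf {n | ∃ s : Finset V, (∀ a b : V, G.Adj a b → a ∈ s ∨ b ∈ s) ∧ s.card = n}

/-- The clique number of a graph: the maximum size of a clique. -/
noncomputable def clNum {V : Type*} (G : SimpleGraph V) : ℕ :=
  sSup {n | ∃ s : Finset V, G.IsNClique n s}

/-- The graph obtained from `G` by adding the edge `{u, v}`. -/
def adjoinEdge {V : Type*} (G : SimpleGraph V) (u v : V) : SimpleGraph V :=
  G ⊔ SimpleGraph.fromEdgeSet {s(u, v)}

/-- `G` contains the path `P₃` as an induced subgraph. -/
def HasInducedP3 {V : Type*} (G : SimpleGraph V) : Prop :=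
  ∃ u v w : V, u ≠ v ∧ v ≠ w ∧ u ≠ w ∧ G.Adj u v ∧ G.Adj v w ∧ ¬ G.Adj u w

/-- `G` is bipartite: its vertex set can be partitioned into two sets such that
every edge joins a vertex of one set to a vertex of the other. -/
def IsBipartite {V : Type*} (G : SimpleGraph V) : Prop :=
  ∃ s : Set V, ∀ ⦃a b : V⦄, G.Adj a b → (a ∈ s ∧ b ∉ s) ∨ (a ∉ s ∧ b ∈ s)

section Aux

open Finset

/-- Adjacency in `adjoinEdge`. -/
lemma adjoinEdge_adj {V : Type*} (G : SimpleGraph V) (u v a b : V) :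
    (adjoinEdge G u v).Adj a b ↔
      G.Adj a b ∨ (a ≠ b ∧ ((a = u ∧ b = v) ∨ (a = v ∧ b = u))) := by
  simp only [adjoinEdge, SimpleGraph.sup_adj, SimpleGraph.fromEdgeSet_adj,
    Set.mem_singleton_iff, Sym2.eq_iff]
  tauto

lemma indNum_eq_of {V : Type*} (G : SimpleGraph V) (k : ℕ)
    (hex : ∃ s : Finset V, (∀ a ∈ s, ∀ b ∈ s, a ≠ b → ¬ G.Adj a b) ∧ s.card = k)
    (hub : ∀ s : Finset V, (∀ a ∈ s, ∀ b ∈ s, a ≠ b → ¬ G.Adj a b) → s.card ≤ k) :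
    indNum G = k := by
  apply IsGreatest.csSup_eq
  exact ⟨hex, by rintro m ⟨s, hs, rfl⟩; exact hub s hs⟩

lemma covNum_eq_sub {V : Type*} [Fintype V] [DecidableEq V] (G : SimpleGraph V) :
    covNum G = Fintype.card V - indNum G := by
  set S := {k | ∃ s : Finset V, (∀ a ∈ s, ∀ b ∈ s, a ≠ b → ¬ G.Adj a b) ∧ s.card = k} with hS
  have hbdd : BddAbove S := by
    refine ⟨Fintype.card V, ?_⟩
    rintro m ⟨s, -, rfl⟩
    exact s.card_le_univ.trans_eq Finset.card_univ
  have hne : S.Nonempty := ⟨0, ∅, by simp, by simp⟩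
  have hmem : indNum G ∈ S := Nat.sSup_mem hne hbdd
  obtain ⟨s, hs, hcard⟩ := hmem
  have hsle : s.card ≤ Fintype.card V := s.card_le_univ.trans_eq Finset.card_univ
  apply IsLeast.csInf_eq
  constructor
  · refine ⟨sᶜ, ?_, ?_⟩
    · intro a b hab
      by_contra h
      push_neg at h
      obtain ⟨ha, hb⟩ := h
      simp only [Finset.mem_compl, not_not] at ha hb
      exact hs a ha b hb (G.ne_of_adj hab) hab
    · rw [Finset.card_compl, hcard]
  · rintro m ⟨t, ht, rfl⟩
    have htc : tᶜ.card ≤ indNum G := by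
      apply le_csSup hbdd
      refine ⟨tᶜ, ?_, rfl⟩
      intro a ha b hb hab hadj
      rcases ht a b hadj with h | h
      · exact (Finset.mem_compl.mp ha) h
      · exact (Finset.mem_compl.mp hb) h
    rw [Finset.card_compl] at htc
    have : t.card ≤ Fintype.card V := t.card_le_univ.trans_eq Finset.card_univ
    omega

/-- Upper bound on independent sets via a covering by cliques (block map). -/
lemma card_le_of_blocks {n m : ℕ} (G : SimpleGraph (Fin n)) (f : Fin n → ℕ)
    (hf : ∀ a, f a < m)
    (hadj : ∀ a b : Fin n, a ≠ b → f a = f b → G.Adj a b)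
    (s : Finset (Fin n)) (hs : ∀ a ∈ s, ∀ b ∈ s, a ≠ b → ¬ G.Adj a b) :
    s.card ≤ m := by
  have hinj : Set.InjOn f s := by
    intro a ha b hb hfab
    by_contra h
    exact hs a ha b hb h (hadj a b h hfab)
  calc s.card = (s.image f).card := (Finset.card_image_of_injOn hinj).symm
    _ ≤ (Finset.range m).card := by
        apply Finset.card_le_card
        intro x hx
        simp only [Finset.mem_image] at hx
        obtain ⟨a, -, rfl⟩ := hx
        exact Finset.mem_range.mpr (hf a)
    _ = m := Finset.card_range m

lemma card_range_filter_mod (n r : ℕ) :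
    ((Finset.range n).filter (fun i => i % 2 = r)).card = (n + 1 - r) / 2 ∨ 2 ≤ r := by
  rcases Nat.lt_or_ge r 2 with hr | hr
  · left
    induction n with
    | zero => simp; omega
    | succ m ih =>
      rw [Finset.range_add_one, Finset.filter_insert]
      by_cases h : m % 2 = r
      · rw [if_pos h, Finset.card_insert_of_notMem (by simp), ih]; omega
      · rw [if_neg h, ih]; omega
  · right; exact hr

lemma card_fin_filter_mod (n r : ℕ) (hr : r < 2) :
    (Finset.univ.filter (fun i : Fin n => i.val % 2 = r)).card = (n + 1 - r) / 2 := by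
  have h2 : (Finset.univ.filter (fun i : Fin n => i.val % 2 = r)).card
      = ((Finset.range n).filter (fun i => i % 2 = r)).card := by
    rw [← Finset.card_image_of_injective _ Fin.val_injective]
    congr 1
    ext x
    simp only [Finset.mem_image, Finset.mem_filter, Finset.mem_range, Finset.mem_univ, true_and]
    constructor
    · rintro ⟨i, hi, rfl⟩; exact ⟨i.isLt, hi⟩
    · rintro ⟨hx, hr'⟩; exact ⟨⟨x, hx⟩, hr', rfl⟩
  rcases card_range_filter_mod n r with h | h
  · rw [h2, h]
  · omega

/-- indNum of the path graph is ⌈n/2⌉. -/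
lemma pathGraph_indNum (n : ℕ) : indNum (pathGraph n) = (n + 1) / 2 := by
  apply indNum_eq_of
  · refine ⟨Finset.univ.filter (fun i : Fin n => i.val % 2 = 0), ?_, ?_⟩
    · intro a ha b hb hab hadj
      rw [Finset.mem_filter] at ha hb
      rw [pathGraph_adj] at hadj
      omega
    · simpa using card_fin_filter_mod n 0 (by norm_num)
  · intro s hs
    apply card_le_of_blocks (pathGraph n) (fun i => i.val / 2) _ _ s hs
    · intro a; have := a.isLt; omega
    · intro a b hab hf
      have : a.val ≠ b.val := fun h => hab (Fin.ext h)
      rw [pathGraph_adj]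
      omega

lemma adjoin_indNum_even (n : ℕ) (he : n % 2 = 0) (u v : Fin n) :
    indNum (adjoinEdge (pathGraph n) u v) = (n + 1) / 2 := by
  apply indNum_eq_of
  · by_cases hcase : u.val % 2 = 1 ∨ v.val % 2 = 1
    · refine ⟨Finset.univ.filter (fun i : Fin n => i.val % 2 = 0), ?_, ?_⟩
      · intro a ha b hb hab hadj
        rw [Finset.mem_filter] at ha hb
        rw [adjoinEdge_adj] at hadj
        rcases hadj with hadj | ⟨-, h | h⟩
        · rw [pathGraph_adj] at hadj; omega
        · obtain ⟨rfl, rfl⟩ := h; omega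
        · obtain ⟨rfl, rfl⟩ := h; omega
      · simpa using card_fin_filter_mod n 0 (by norm_num)
    · push_neg at hcase
      refine ⟨Finset.univ.filter (fun i : Fin n => i.val % 2 = 1), ?_, ?_⟩
      · intro a ha b hb hab hadj
        rw [Finset.mem_filter] at ha hb
        rw [adjoinEdge_adj] at hadj
        rcases hadj with hadj | ⟨-, h | h⟩
        · rw [pathGraph_adj] at hadj; omega
        · obtain ⟨rfl, rfl⟩ := h; omega
        · obtain ⟨rfl, rfl⟩ := h; omega
      · have := card_fin_filter_mod n 1 (by norm_num)
        rw [this]; omega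
  · intro s hs
    apply card_le_of_blocks _ (fun i => i.val / 2) _ _ s hs
    · intro a; have := a.isLt; omega
    · intro a b hab hf
      have : a.val ≠ b.val := fun h => hab (Fin.ext h)
      rw [adjoinEdge_adj]
      left
      rw [pathGraph_adj]
      omega

lemma adjoin_indNum_odd (n : ℕ) (hn : 4 ≤ n) (ho : n % 2 = 1) :
    indNum (adjoinEdge (pathGraph n) ⟨0, by omega⟩ ⟨2, by omega⟩) = (n - 1) / 2 := by
  apply indNum_eq_of
  · refine ⟨(Finset.univ.filter (fun i : Fin n => i.val % 2 = 0)).erase ⟨0, by omega⟩, ?_, ?_⟩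
    · intro a ha b hb hab hadj
      rw [Finset.mem_erase, Finset.mem_filter] at ha hb
      obtain ⟨ha0, -, ha2⟩ := ha
      obtain ⟨hb0, -, hb2⟩ := hb
      rw [adjoinEdge_adj] at hadj
      rcases hadj with hadj | ⟨-, h | h⟩
      · rw [pathGraph_adj] at hadj; omega
      · exact ha0 h.1
      · exact hb0 h.2
    · rw [Finset.card_erase_of_mem (by simp), card_fin_filter_mod n 0 (by norm_num)]
      omega
  · intro s hs
    apply card_le_of_blocks _ (fun i => if i.val ≤ 2 then 0 else (i.val - 1) / 2) _ _ s hs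
    · intro a
      have := a.isLt
      by_cases h : a.val ≤ 2 <;> simp [h] <;> omega
    · intro a b hab hf
      have hne : a.val ≠ b.val := fun h => hab (Fin.ext h)
      rw [adjoinEdge_adj]
      by_cases hx : a.val ≤ 2 <;> by_cases hy : b.val ≤ 2 <;>
        simp only [hx, hy, if_pos, if_neg, if_true, if_false] at hf
      · -- both ≤ 2
        by_cases hp : a.val + 1 = b.val ∨ b.val + 1 = a.val
        · exact Or.inl (pathGraph_adj.mpr hp)
        · right
          refine ⟨hab, ?_⟩
          have : (a.val = 0 ∧ b.val = 2) ∨ (a.val = 2 ∧ b.val = 0) := by omega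
          rcases this with ⟨h1, h2⟩ | ⟨h1, h2⟩
          · exact Or.inl ⟨Fin.ext h1, Fin.ext h2⟩
          · exact Or.inr ⟨Fin.ext h1, Fin.ext h2⟩
      · omega
      · omega
      · left
        rw [pathGraph_adj]
        omega

end Aux

/-- For `n ≥ 4`: if `n` is odd then `P_n` is neither α-unfrozen nor β-unfrozen;
if `n` is even then `P_n` is both α-unfrozen and β-unfrozen. -/
theorem pathGraph_alpha_beta_unfrozenness (n : ℕ) (hn : 4 ≤ n) :
    (Odd n →
      ¬ (∀ u v : Fin n, u ≠ v → ¬ (pathGraph n).Adj u v →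
          indNum (adjoinEdge (pathGraph n) u v) = indNum (pathGraph n)) ∧
      ¬ (∀ u v : Fin n, u ≠ v → ¬ (pathGraph n).Adj u v →
          covNum (adjoinEdge (pathGraph n) u v) = covNum (pathGraph n))) ∧
    (Even n →
      (∀ u v : Fin n, u ≠ v → ¬ (pathGraph n).Adj u v →
          indNum (adjoinEdge (pathGraph n) u v) = indNum (pathGraph n)) ∧
      (∀ u v : Fin n, u ≠ v → ¬ (pathGraph n).Adj u v →
          covNum (adjoinEdge (pathGraph n) u v) = covNum (pathGraph n))) := by
  have hcard : Fintype.card (Fin n) = n := Fintype.card_fin n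
  constructor
  · intro hodd
    have ho : n % 2 = 1 := Nat.odd_iff.mp hodd
    set u : Fin n := ⟨0, by omega⟩ with hu
    set v : Fin n := ⟨2, by omega⟩ with hv
    have huv : u ≠ v := by simp [hu, hv, Fin.ext_iff]
    have hna : ¬ (pathGraph n).Adj u v := by
      rw [pathGraph_adj]; simp [hu, hv]
    have h1 : indNum (pathGraph n) = (n + 1) / 2 := pathGraph_indNum n
    have h2 : indNum (adjoinEdge (pathGraph n) u v) = (n - 1) / 2 :=
      adjoin_indNum_odd n hn ho
    constructor
    · intro h
      have := h u v huv hna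
      rw [h1, h2] at this
      omega
    · intro h
      have := h u v huv hna
      rw [covNum_eq_sub, covNum_eq_sub, h1, h2, hcard] at this
      omega
  · intro heven
    have he : n % 2 = 0 := Nat.even_iff.mp heven
    have key : ∀ u v : Fin n, u ≠ v → ¬ (pathGraph n).Adj u v →
        indNum (adjoinEdge (pathGraph n) u v) = indNum (pathGraph n) := by
      intro u v _ _
      rw [pathGraph_indNum, adjoin_indNum_even n he]
    refine ⟨key, ?_⟩
    intro u v h1 h2
    rw [covNum_eq_sub, covNum_eq_sub, key u v h1 h2]
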